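/- arXiv:1610.08231 — 2 statements merged into one kernel-verified Lean document; each statement's English description precedes it below -/
import Mathlib

section
/- Let M be a triangulated category that is a module over a tensor triangulated category (K,⊗,1), let c : SMod(M) → SMod(M) be an operator that is extensive, order-preserving and of finite type, let 𝔘 be an ultrafilter on the set SMod^c(M), and let L_𝔘 := {m ∈ M : U(m) ∩ SMod^c(M) ∈ 𝔘}. Then for every object m of M, L_𝔘 ∈ U(m) ∩ SMod^c(M) if and only if U(m) ∩ SMod^c(M) ∈ 𝔘. -/
open CategoryTheory CategoryTheory.Limits CategoryTheory.Pretriangulated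
open CategoryTheory.MonoidalCategory ZeroObject

universe v u v' u'

/-- The data of the action of a tensor triangulated category `(K,⊗,1)` on a triangulated
category `M`, recorded on objects together with the unit and shift coherences that we use. -/
structure TTModuleStr (K : Type u) [Category.{v} K] [MonoidalCategory K] [HasShift K ℤ]
    (M : Type u') [Category.{v'} M] [HasShift M ℤ] where
  act : K → M → M
  act_unit : ∀ m : M, Nonempty (act (𝟙_ K) m ≅ m)
  act_unit_shift : ∀ m : M, Nonempty (act ((𝟙_ K)⟦(1 : ℤ)⟧) m ≅ m⟦(1 : ℤ)⟧)
  act_unit_shift_neg : ∀ m : M, Nonempty (act ((𝟙_ K)⟦(-1 : ℤ)⟧) m ≅ m⟦(-1 : ℤ)⟧)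

variable {K : Type u} [Category.{v} K] [MonoidalCategory K] [HasZeroObject K] [Preadditive K]
  [HasShift K ℤ] [∀ n : ℤ, (shiftFunctor K n).Additive] [Pretriangulated K]
variable {M : Type u'} [Category.{v'} M] [HasZeroObject M] [Preadditive M] [HasShift M ℤ]
  [∀ n : ℤ, (shiftFunctor M n).Additive] [Pretriangulated M] [HasBinaryBiproducts M]

/-- A thick `K`-submodule of `M`. -/
structure ThickSubmodule (A : TTModuleStr K M) where
  carrier : Set M
  zero_mem : (0 : M) ∈ carrier
  act_mem : ∀ (a : K) (m : M), m ∈ carrier → A.act a m ∈ carrier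
  biprod_mem_iff : ∀ m m' : M, (m ⊞ m') ∈ carrier ↔ (m ∈ carrier ∧ m' ∈ carrier)
  mem₃_of_dist : ∀ T : Triangle M, T ∈ (distTriang M) →
    T.obj₁ ∈ carrier → T.obj₂ ∈ carrier → T.obj₃ ∈ carrier
  mem₁_of_dist : ∀ T : Triangle M, T ∈ (distTriang M) →
    T.obj₂ ∈ carrier → T.obj₃ ∈ carrier → T.obj₁ ∈ carrier
  mem₂_of_dist : ∀ T : Triangle M, T ∈ (distTriang M) →
    T.obj₁ ∈ carrier → T.obj₃ ∈ carrier → T.obj₂ ∈ carrier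

variable (A : TTModuleStr K M)

instance : SetLike (ThickSubmodule A) M where
  coe N := N.carrier
  coe_injective := by intro N N' h; cases N; cases N'; congr

/-- `U(m) = { N ∈ SMod(M) | m ∈ N }`. -/
def U (m : M) : Set (ThickSubmodule A) := {N : ThickSubmodule A | m ∈ N.carrier}

/-- The topology on `SMod(M)` generated by the subbasis `{U(m)}_{m ∈ M}`. -/
instance : TopologicalSpace (ThickSubmodule A) :=
  TopologicalSpace.generateFrom (Set.range (U A))

/-- The thick `K`-submodule of `M` generated by a set `X` of objects of `M`. -/
def genSub (X : Set M) : ThickSubmodule A where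
  carrier := ⋂ (N : ThickSubmodule A) (_ : X ⊆ N.carrier), N.carrier
  zero_mem := by
    simp only [Set.mem_iInter]; intro N _; exact N.zero_mem
  act_mem := by
    intro a m hm
    simp only [Set.mem_iInter] at hm ⊢
    intro N hN
    exact N.act_mem a m (hm N hN)
  biprod_mem_iff := by
    intro m m'
    simp only [Set.mem_iInter]
    constructor
    · intro h
      exact ⟨fun N hN => ((N.biprod_mem_iff m m').1 (h N hN)).1,
        fun N hN => ((N.biprod_mem_iff m m').1 (h N hN)).2⟩
    · rintro ⟨h1, h2⟩ N hN
      exact (N.biprod_mem_iff m m').2 ⟨h1 N hN, h2 N hN⟩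
  mem₃_of_dist := by
    intro T hT h1 h2
    simp only [Set.mem_iInter] at h1 h2 ⊢
    intro N hN
    exact N.mem₃_of_dist T hT (h1 N hN) (h2 N hN)
  mem₁_of_dist := by
    intro T hT h1 h2
    simp only [Set.mem_iInter] at h1 h2 ⊢
    intro N hN
    exact N.mem₁_of_dist T hT (h1 N hN) (h2 N hN)
  mem₂_of_dist := by
    intro T hT h1 h2
    simp only [Set.mem_iInter] at h1 h2 ⊢
    intro N hN
    exact N.mem₂_of_dist T hT (h1 N hN) (h2 N hN)

/-- The largest thick `K`-submodule: all of `M`. -/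
def topSub : ThickSubmodule A where
  carrier := Set.univ
  zero_mem := trivial
  act_mem := fun _ _ _ => trivial
  biprod_mem_iff := fun _ _ => by simp
  mem₃_of_dist := fun _ _ _ _ => trivial
  mem₁_of_dist := fun _ _ _ _ => trivial
  mem₂_of_dist := fun _ _ _ _ => trivial

/-- An operator on `SMod(M)` is extensive if `N ⊆ c(N)` for all `N`. -/
def Extensive (c : ThickSubmodule A → ThickSubmodule A) : Prop :=
  ∀ N : ThickSubmodule A, N.carrier ⊆ (c N).carrier

/-- An operator on `SMod(M)` is order-preserving if `N ⊆ N'` implies `c(N) ⊆ c(N')`. -/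
def OrderPreserving (c : ThickSubmodule A → ThickSubmodule A) : Prop :=
  ∀ N N' : ThickSubmodule A, N.carrier ⊆ N'.carrier → (c N).carrier ⊆ (c N').carrier

/-- An operator on `SMod(M)` is idempotent if `c(c(N)) = c(N)` for all `N`. -/
def Idempotent (c : ThickSubmodule A → ThickSubmodule A) : Prop :=
  ∀ N : ThickSubmodule A, c (c N) = c N

/-- An operator on `SMod(M)` is of finite type if `c(N) = ⋃_{n ∈ N} c(K(n))`. -/
def FiniteType (c : ThickSubmodule A → ThickSubmodule A) : Prop :=
  ∀ N : ThickSubmodule A,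
    (c N).carrier = ⋃ n ∈ N.carrier, (c (genSub A {n})).carrier

/-- A topological space is spectral if it is quasi-compact, `T0`, sober, and its
quasi-compact open subsets form a basis that is closed under finite intersections. -/
def IsSpectralSpace (X : Type*) [TopologicalSpace X] : Prop :=
  CompactSpace X ∧ T0Space X ∧ QuasiSober X ∧
    TopologicalSpace.IsTopologicalBasis {s : Set X | IsOpen s ∧ IsCompact s} ∧
    ∀ s t : Set X, IsOpen s → IsCompact s → IsOpen t → IsCompact t → IsCompact (s ∩ t)

/-- The carrier of the paper's `L_𝔘`, for an arbitrary filter in place of `𝔘`. -/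
def limitCarrier (c : ThickSubmodule A → ThickSubmodule A)
    (F : Filter {N : ThickSubmodule A // c N = N}) : Set M :=
  {m : M | {N : {N : ThickSubmodule A // c N = N} | N.1 ∈ U A m} ∈ F}

theorem genSub_singleton_subset {n : M} {N : ThickSubmodule A} (hn : n ∈ N.carrier) :
    (genSub A {n}).carrier ⊆ N.carrier :=
  Set.biInter_subset_of_mem (Set.singleton_subset_iff.2 hn)

theorem c_genSub_singleton_subset {c : ThickSubmodule A → ThickSubmodule A}
    (hord : OrderPreserving A c) {N : ThickSubmodule A} (hN : c N = N) {n : M}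
    (hn : n ∈ N.carrier) : (c (genSub A {n})).carrier ⊆ N.carrier :=
  hN ▸ hord _ _ (genSub_singleton_subset A hn)

/-- Finite type reduces `c L ⊆ L` to the generators `c(K(n))`, and each of these lies in
every `c`-closed `N` containing `n`, so the `F`-large set `U(n)` is contained in `U(x)`. -/
theorem c_eq_self_of_carrier_eq_limitCarrier {c : ThickSubmodule A → ThickSubmodule A}
    (hext : Extensive A c) (hord : OrderPreserving A c) (hft : FiniteType A c)
    (F : Filter {N : ThickSubmodule A // c N = N}) {L : ThickSubmodule A}
    (hL : L.carrier = limitCarrier A c F) : c L = L := by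
  refine SetLike.ext' (Set.Subset.antisymm ?_ (hext L))
  change (c L).carrier ⊆ L.carrier
  rw [hft L]
  refine Set.iUnion₂_subset fun n hn x hx => ?_
  rw [hL] at hn ⊢
  exact Filter.mem_of_superset hn fun N hnN => c_genSub_singleton_subset A hord N.2 hnN hx

/-- For every object `m` of `M`, `L_𝔘 ∈ U(m) ∩ SMod^c(M)` if and only if
`U(m) ∩ SMod^c(M) ∈ 𝔘`. -/
theorem statement6 (c : ThickSubmodule A → ThickSubmodule A)
    (hext : Extensive A c) (hord : OrderPreserving A c) (hft : FiniteType A c)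
    (𝔘 : Ultrafilter {N : ThickSubmodule A // c N = N}) :
    ∀ L : ThickSubmodule A,
      L.carrier = {m : M | {N : {N : ThickSubmodule A // c N = N} | N.1 ∈ U A m} ∈ 𝔘} →
      ∀ m : M, (L ∈ U A m ∧ c L = L) ↔
        {N : {N : ThickSubmodule A // c N = N} | N.1 ∈ U A m} ∈ 𝔘 := by
  intro L hL m
  have hcL : c L = L := c_eq_self_of_carrier_eq_limitCarrier A hext hord hft 𝔘 hL
  change (m ∈ L.carrier ∧ c L = L) ↔ _
  rw [hL]
  exact and_iff_left hcL
end

section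
/- Let M be a triangulated category that is a module over a tensor triangulated category (K,⊗,1), and let 𝔉 = {F_i}_{i ∈ I} be a family of thick K-submodules of M with M ∈ 𝔉. Then the following are equivalent: (1) 𝔉 satisfies (a) for any nonempty subset J ⊆ I, the intersection ∩_{j ∈ J} F_j belongs to 𝔉, and (b) for any filtered directed collection {F_k}_{k ∈ K} of members of 𝔉, the union ∪_{k ∈ K} F_k belongs to 𝔉; (2) there exists a closure operator c : SMod(M) → SMod(M) of finite type such that 𝔉 is exactly the collection of fixed points of c. In particular, if (1) holds then 𝔉 is a spectral space with {U(m) ∩ 𝔉}_{m ∈ M} a basis of quasi-compact open sets. -/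
open CategoryTheory CategoryTheory.Limits CategoryTheory.Pretriangulated
open CategoryTheory.MonoidalCategory ZeroObject

universe v u v' u'

variable {K : Type u} [Category.{v} K] [MonoidalCategory K] [HasZeroObject K] [Preadditive K]
  [HasShift K ℤ] [∀ n : ℤ, (shiftFunctor K n).Additive] [Pretriangulated K]
variable {M : Type u'} [Category.{v'} M] [HasZeroObject M] [Preadditive M] [HasShift M ℤ]
  [∀ n : ℤ, (shiftFunctor M n).Additive] [Pretriangulated M] [HasBinaryBiproducts M]

variable (A : TTModuleStr K M)

/-!
The closure operator attached to `𝔉` sends `N` to the smallest member of `𝔉` containing `N`.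
Since thick submodules are closed under `⊞`, the submodules `c(K(n))` for `n ∈ N` form a
directed family whose union is again in `𝔉`; this gives finite type. Conversely, fixed points of
an extensive monotone operator are closed under intersections, and finite type makes them
closed under directed unions.

For the topology, `U(m) ∩ U(m') = U(m ⊞ m')`, and a point `x` specializes to `y` exactly when
`y ⊆ x`. Hence `U(m) ∩ 𝔉` is the set of generalizations of its least element `c(K(m))`, so it
is quasi-compact. The generic point of an irreducible closed `Z ⊆ 𝔉` is the union of the
members of `Z`, which lies in `𝔉` because irreducibility makes that union `⊞`-closed.
-/

section

open TopologicalSpace Topology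

variable {A}

omit [HasZeroObject K] [Preadditive K] [∀ n : ℤ, (shiftFunctor K n).Additive] [Pretriangulated K]

namespace ThickSubmodule

lemma carrier_injective : Function.Injective (carrier : ThickSubmodule A → Set M) :=
  SetLike.coe_injective

def sInter (G : Set (ThickSubmodule A)) : ThickSubmodule A :=
  genSub A (⋂ N ∈ G, N.carrier)

lemma subset_genSub (X : Set M) : X ⊆ (genSub A X).carrier :=
  Set.subset_iInter₂ fun _ hN => hN

lemma genSub_subset {X : Set M} {N : ThickSubmodule A} (h : X ⊆ N.carrier) :
    (genSub A X).carrier ⊆ N.carrier :=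
  Set.iInter₂_subset N h

lemma genSub_singleton_subset_iff {m : M} {N : ThickSubmodule A} :
    (genSub A {m}).carrier ⊆ N.carrier ↔ m ∈ N.carrier :=
  ⟨fun h => h (subset_genSub {m} rfl), fun h => genSub_subset (Set.singleton_subset_iff.2 h)⟩

lemma carrier_sInter (G : Set (ThickSubmodule A)) :
    (sInter G).carrier = ⋂ N ∈ G, N.carrier :=
  Set.Subset.antisymm (Set.subset_iInter₂ fun _ hN => genSub_subset (Set.biInter_subset_of_mem hN))
    (subset_genSub _)

lemma exists_mem_of_mem_biUnion {G : Set (ThickSubmodule A)}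
    (hG : DirectedOn (fun N N' : ThickSubmodule A => N.carrier ⊆ N'.carrier) G) {m m' : M}
    (hm : m ∈ ⋃ N ∈ G, N.carrier) (hm' : m' ∈ ⋃ N ∈ G, N.carrier) :
    ∃ N ∈ G, m ∈ N.carrier ∧ m' ∈ N.carrier := by
  obtain ⟨N₁, hN₁, hm⟩ := Set.mem_iUnion₂.1 hm
  obtain ⟨N₂, hN₂, hm'⟩ := Set.mem_iUnion₂.1 hm'
  obtain ⟨N, hN, h₁, h₂⟩ := hG N₁ hN₁ N₂ hN₂
  exact ⟨N, hN, h₁ hm, h₂ hm'⟩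

def directedUnion (G : Set (ThickSubmodule A)) (hne : G.Nonempty)
    (hG : DirectedOn (fun N N' : ThickSubmodule A => N.carrier ⊆ N'.carrier) G) :
    ThickSubmodule A where
  carrier := ⋃ N ∈ G, N.carrier
  zero_mem := by
    obtain ⟨N, hN⟩ := hne
    exact Set.mem_biUnion hN N.zero_mem
  act_mem a m hm := by
    obtain ⟨N, hN, hm⟩ := Set.mem_iUnion₂.1 hm
    exact Set.mem_biUnion hN (N.act_mem a m hm)
  biprod_mem_iff m m' := by
    constructor
    · intro h
      obtain ⟨N, hN, h⟩ := Set.mem_iUnion₂.1 h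
      obtain ⟨hm, hm'⟩ := (N.biprod_mem_iff m m').1 h
      exact ⟨Set.mem_biUnion hN hm, Set.mem_biUnion hN hm'⟩
    · rintro ⟨hm, hm'⟩
      obtain ⟨N, hN, hm, hm'⟩ := exists_mem_of_mem_biUnion hG hm hm'
      exact Set.mem_biUnion hN ((N.biprod_mem_iff m m').2 ⟨hm, hm'⟩)
  mem₃_of_dist T hT h₁ h₂ := by
    obtain ⟨N, hN, h₁, h₂⟩ := exists_mem_of_mem_biUnion hG h₁ h₂
    exact Set.mem_biUnion hN (N.mem₃_of_dist T hT h₁ h₂)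
  mem₁_of_dist T hT h₂ h₃ := by
    obtain ⟨N, hN, h₂, h₃⟩ := exists_mem_of_mem_biUnion hG h₂ h₃
    exact Set.mem_biUnion hN (N.mem₁_of_dist T hT h₂ h₃)
  mem₂_of_dist T hT h₁ h₃ := by
    obtain ⟨N, hN, h₁, h₃⟩ := exists_mem_of_mem_biUnion hG h₁ h₃
    exact Set.mem_biUnion hN (N.mem₂_of_dist T hT h₁ h₃)

lemma genSub_singleton_subset_genSub_biprod (m m' : M) :
    (genSub A {m}).carrier ⊆ (genSub A {m ⊞ m'}).carrier ∧
      (genSub A {m'}).carrier ⊆ (genSub A {m ⊞ m'}).carrier := by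
  simp only [genSub_singleton_subset_iff]
  exact ((genSub A {m ⊞ m'}).biprod_mem_iff m m').1 (subset_genSub _ rfl)

end ThickSubmodule

open ThickSubmodule

variable {𝔉 : Set (ThickSubmodule A)}

def IsClosedUnderInter (𝔉 : Set (ThickSubmodule A)) : Prop :=
  ∀ G : Set (ThickSubmodule A), G ⊆ 𝔉 → G.Nonempty →
    ∃ F ∈ 𝔉, F.carrier = ⋂ N ∈ G, ThickSubmodule.carrier N

def IsClosedUnderDirectedUnion (𝔉 : Set (ThickSubmodule A)) : Prop :=
  ∀ G : Set (ThickSubmodule A), G ⊆ 𝔉 → G.Nonempty →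
    DirectedOn (fun N N' : ThickSubmodule A => N.carrier ⊆ N'.carrier) G →
    ∃ F ∈ 𝔉, F.carrier = ⋃ N ∈ G, ThickSubmodule.carrier N

def familyClosure (𝔉 : Set (ThickSubmodule A)) (N : ThickSubmodule A) : ThickSubmodule A :=
  sInter {F ∈ 𝔉 | N.carrier ⊆ F.carrier}

lemma subset_familyClosure (N : ThickSubmodule A) : N.carrier ⊆ (familyClosure 𝔉 N).carrier := by
  rw [familyClosure, carrier_sInter]
  exact Set.subset_iInter₂ fun _ hF => hF.2

lemma familyClosure_subset {N F : ThickSubmodule A} (hF : F ∈ 𝔉) (h : N.carrier ⊆ F.carrier) :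
    (familyClosure 𝔉 N).carrier ⊆ F.carrier := by
  rw [familyClosure, carrier_sInter]
  exact Set.biInter_subset_of_mem ⟨hF, h⟩

lemma familyClosure_mono {N N' : ThickSubmodule A} (h : N.carrier ⊆ N'.carrier) :
    (familyClosure 𝔉 N).carrier ⊆ (familyClosure 𝔉 N').carrier := by
  simp only [familyClosure, carrier_sInter]
  exact Set.subset_iInter₂ fun F hF => Set.biInter_subset_of_mem ⟨hF.1, h.trans hF.2⟩

lemma familyClosure_mem (hM : topSub A ∈ 𝔉) (ha : IsClosedUnderInter 𝔉) (N : ThickSubmodule A) :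
    familyClosure 𝔉 N ∈ 𝔉 := by
  obtain ⟨F, hF, hcar⟩ :=
    ha {F ∈ 𝔉 | N.carrier ⊆ F.carrier} (fun _ hF => hF.1) ⟨topSub A, hM, Set.subset_univ _⟩
  rwa [show familyClosure 𝔉 N = F from carrier_injective (hcar ▸ carrier_sInter _)]

lemma familyClosure_eq_self_iff (hM : topSub A ∈ 𝔉) (ha : IsClosedUnderInter 𝔉)
    (N : ThickSubmodule A) : familyClosure 𝔉 N = N ↔ N ∈ 𝔉 :=
  ⟨fun h => h ▸ familyClosure_mem hM ha N, fun hN => carrier_injective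
    ((familyClosure_subset hN subset_rfl).antisymm (subset_familyClosure N))⟩

lemma familyClosure_genSub_singleton_subset_iff {m : M} {F : ThickSubmodule A} (hF : F ∈ 𝔉) :
    (familyClosure 𝔉 (genSub A {m})).carrier ⊆ F.carrier ↔ m ∈ F.carrier :=
  ⟨fun h => h (subset_familyClosure _ (subset_genSub _ rfl)),
    fun h => familyClosure_subset hF (genSub_singleton_subset_iff.2 h)⟩

lemma mem_familyClosure_genSub_singleton (m : M) :
    m ∈ (familyClosure 𝔉 (genSub A {m})).carrier :=
  subset_familyClosure _ (subset_genSub _ rfl)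

lemma exists_mem_carrier_eq_biUnion_familyClosure (hM : topSub A ∈ 𝔉)
    (ha : IsClosedUnderInter 𝔉) (hb : IsClosedUnderDirectedUnion 𝔉) {W : Set M}
    (hW : W.Nonempty) (hW_biprod : ∀ m ∈ W, ∀ m' ∈ W, (m ⊞ m') ∈ W) :
    ∃ F ∈ 𝔉, F.carrier = ⋃ m ∈ W, (familyClosure 𝔉 (genSub A {m})).carrier := by
  have hdir : DirectedOn (fun N N' : ThickSubmodule A => N.carrier ⊆ N'.carrier)
      ((fun m => familyClosure 𝔉 (genSub A {m})) '' W) := by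
    rintro _ ⟨m, hm, rfl⟩ _ ⟨m', hm', rfl⟩
    obtain ⟨h, h'⟩ := genSub_singleton_subset_genSub_biprod (A := A) m m'
    exact ⟨_, ⟨m ⊞ m', hW_biprod m hm m' hm', rfl⟩, familyClosure_mono h, familyClosure_mono h'⟩
  obtain ⟨F, hF, hcar⟩ :=
    hb _ (by rintro _ ⟨m, -, rfl⟩; exact familyClosure_mem hM ha _) (hW.image _) hdir
  exact ⟨F, hF, by rw [hcar, Set.biUnion_image]⟩

lemma familyClosure_finiteType (hM : topSub A ∈ 𝔉) (ha : IsClosedUnderInter 𝔉)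
    (hb : IsClosedUnderDirectedUnion 𝔉) : FiniteType A (familyClosure 𝔉) := by
  intro N
  refine Set.Subset.antisymm ?_
    (Set.iUnion₂_subset fun n hn => familyClosure_mono (genSub_singleton_subset_iff.2 hn))
  obtain ⟨F, hF, hcar⟩ := exists_mem_carrier_eq_biUnion_familyClosure hM ha hb ⟨0, N.zero_mem⟩
    fun m hm m' hm' => (N.biprod_mem_iff m m').2 ⟨hm, hm'⟩
  rw [← hcar]
  refine familyClosure_subset hF fun n hn => ?_
  rw [hcar]
  exact Set.mem_biUnion hn (mem_familyClosure_genSub_singleton n)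

theorem exists_closureOperator_of_isClosedUnder (hM : topSub A ∈ 𝔉)
    (ha : IsClosedUnderInter 𝔉) (hb : IsClosedUnderDirectedUnion 𝔉) :
    ∃ c : ThickSubmodule A → ThickSubmodule A, Extensive A c ∧ OrderPreserving A c ∧
      Idempotent A c ∧ FiniteType A c ∧ 𝔉 = {N : ThickSubmodule A | c N = N} :=
  ⟨familyClosure 𝔉, subset_familyClosure, fun _ _ => familyClosure_mono,
    fun N => (familyClosure_eq_self_iff hM ha _).2 (familyClosure_mem hM ha N),
    familyClosure_finiteType hM ha hb,
    Set.ext fun N => (familyClosure_eq_self_iff hM ha N).symm⟩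

section FixedPoints

variable {c : ThickSubmodule A → ThickSubmodule A}

lemma Extensive.eq_of_subset (hext : Extensive A c) {N : ThickSubmodule A}
    (h : (c N).carrier ⊆ N.carrier) : c N = N :=
  carrier_injective (h.antisymm (hext N))

theorem isClosedUnderInter_setOf_fixed (hext : Extensive A c) (hmono : OrderPreserving A c) :
    IsClosedUnderInter {N : ThickSubmodule A | c N = N} := by
  refine fun G hG _ => ⟨sInter G, hext.eq_of_subset ?_, carrier_sInter G⟩
  rw [carrier_sInter]
  refine Set.subset_iInter₂ fun N hN => ?_
  rw [← hG hN]
  exact hmono _ _ (by rw [carrier_sInter]; exact Set.biInter_subset_of_mem hN)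

theorem isClosedUnderDirectedUnion_setOf_fixed (hext : Extensive A c)
    (hmono : OrderPreserving A c) (hft : FiniteType A c) :
    IsClosedUnderDirectedUnion {N : ThickSubmodule A | c N = N} := by
  refine fun G hG hne hdir => ⟨directedUnion G hne hdir, hext.eq_of_subset ?_, rfl⟩
  rw [hft]
  refine Set.iUnion₂_subset fun n hn => ?_
  obtain ⟨N, hN, hn⟩ := Set.mem_iUnion₂.1 hn
  have hcN : (c (genSub A {n})).carrier ⊆ N.carrier :=
    hG hN ▸ hmono _ _ (genSub_singleton_subset_iff.2 hn)
  exact hcN.trans (Set.subset_biUnion_of_mem (u := carrier) hN)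

end FixedPoints

section Topology

lemma U_biprod (m m' : M) : U A (m ⊞ m') = U A m ∩ U A m' :=
  Set.ext fun N => N.biprod_mem_iff m m'

variable (A) in
lemma isTopologicalBasis_range_U : IsTopologicalBasis (Set.range (U A)) where
  exists_subset_inter := by
    rintro _ ⟨m, rfl⟩ _ ⟨m', rfl⟩ N hN
    exact ⟨_, ⟨m ⊞ m', rfl⟩, by rwa [U_biprod], (U_biprod m m').le⟩
  sUnion_eq := Set.sUnion_eq_univ_iff.2 fun N => ⟨_, ⟨0, rfl⟩, N.zero_mem⟩
  eq_generateFrom := rfl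

variable (𝔉) in
lemma isTopologicalBasis_preimage_U :
    IsTopologicalBasis (Set.range fun m : M => (Subtype.val ⁻¹' U A m : Set 𝔉)) := by
  simpa only [← Set.range_comp'] using
    (isTopologicalBasis_range_U A).isInducing IsInducing.subtypeVal

lemma specializes_iff_carrier_subset {x y : 𝔉} : x ⤳ y ↔ y.1.carrier ⊆ x.1.carrier := by
  refine ⟨fun h m hm => h.mem_open ((isTopologicalBasis_preimage_U 𝔉).isOpen ⟨m, rfl⟩)
    (show y ∈ Subtype.val ⁻¹' U A m from hm), fun h => ?_⟩
  refine specializes_iff_forall_open.2 fun s hs hy => ?_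
  obtain ⟨_, ⟨m, rfl⟩, hym, hms⟩ :=
    (isTopologicalBasis_preimage_U 𝔉).exists_subset_of_mem_open hy hs
  exact hms (h hym)

instance : T0Space 𝔉 :=
  (t0Space_iff_inseparable _).2 fun _ _ h => Subtype.ext <| carrier_injective <|
    (specializes_iff_carrier_subset.1 (inseparable_iff_specializes_and.1 h).2).antisymm
      (specializes_iff_carrier_subset.1 (inseparable_iff_specializes_and.1 h).1)

lemma preimage_U_eq_nhdsKer (hM : topSub A ∈ 𝔉) (ha : IsClosedUnderInter 𝔉) (m : M) :
    (Subtype.val ⁻¹' U A m : Set 𝔉) =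
      nhdsKer {(⟨familyClosure 𝔉 (genSub A {m}), familyClosure_mem hM ha _⟩ : 𝔉)} := by
  ext x
  rw [mem_nhdsKer_singleton, specializes_iff_carrier_subset,
    familyClosure_genSub_singleton_subset_iff x.2]
  rfl

lemma isCompact_preimage_U (hM : topSub A ∈ 𝔉) (ha : IsClosedUnderInter 𝔉) (m : M) :
    IsCompact (Subtype.val ⁻¹' U A m : Set 𝔉) :=
  preimage_U_eq_nhdsKer hM ha m ▸ isCompact_singleton.nhdsKer

lemma quasiSober_of_isClosedUnder (hM : topSub A ∈ 𝔉) (ha : IsClosedUnderInter 𝔉)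
    (hb : IsClosedUnderDirectedUnion 𝔉) : QuasiSober 𝔉 where
  sober {Z} hZ hZc := by
    set W := ⋃ x ∈ Z, x.1.carrier
    have hW_biprod : ∀ m ∈ W, ∀ m' ∈ W, (m ⊞ m') ∈ W := by
      intro m hm m' hm'
      obtain ⟨x, hxZ, hx⟩ := Set.mem_iUnion₂.1 hm
      obtain ⟨x', hx'Z, hx'⟩ := Set.mem_iUnion₂.1 hm'
      obtain ⟨y, hyZ, hym, hym'⟩ := hZ.2 _ _ ((isTopologicalBasis_preimage_U 𝔉).isOpen ⟨m, rfl⟩)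
        ((isTopologicalBasis_preimage_U 𝔉).isOpen ⟨m', rfl⟩) ⟨x, hxZ, hx⟩ ⟨x', hx'Z, hx'⟩
      exact Set.mem_biUnion hyZ ((y.1.biprod_mem_iff m m').2 ⟨hym, hym'⟩)
    obtain ⟨x₀, hx₀⟩ := hZ.1
    obtain ⟨F, hF, hcar⟩ := exists_mem_carrier_eq_biUnion_familyClosure hM ha hb
      ⟨0, Set.mem_biUnion hx₀ x₀.1.zero_mem⟩ hW_biprod
    have hFW : F.carrier = W := by
      refine hcar.trans (Set.Subset.antisymm (Set.iUnion₂_subset fun m hm => ?_)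
        fun m hm => Set.mem_biUnion hm (mem_familyClosure_genSub_singleton m))
      obtain ⟨x, hxZ, hx⟩ := Set.mem_iUnion₂.1 hm
      exact ((familyClosure_genSub_singleton_subset_iff x.2).2 hx).trans
        (Set.subset_biUnion_of_mem (u := fun x : 𝔉 => x.1.carrier) hxZ)
    have hFZ : (⟨F, hF⟩ : 𝔉) ∈ Z := by
      by_contra hF_notMem
      obtain ⟨_, ⟨m, rfl⟩, hmF, hmZ⟩ := (isTopologicalBasis_preimage_U 𝔉).exists_subset_of_mem_open
        (show _ ∈ Zᶜ from hF_notMem) hZc.isOpen_compl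
      obtain ⟨x, hxZ, hx⟩ := Set.mem_iUnion₂.1 (show m ∈ W from hFW ▸ hmF)
      exact hmZ hx hxZ
    refine ⟨⟨F, hF⟩, isGenericPoint_iff_specializes.2 fun y => ⟨fun h => h.mem_closed hZc hFZ,
      fun hy => specializes_iff_carrier_subset.2 ?_⟩⟩
    rw [hFW]
    exact Set.subset_biUnion_of_mem (u := fun x : 𝔉 => x.1.carrier) hy

theorem spectralSpace_of_isClosedUnder (hM : topSub A ∈ 𝔉) (ha : IsClosedUnderInter 𝔉)
    (hb : IsClosedUnderDirectedUnion 𝔉) : SpectralSpace 𝔉 where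
  isCompact_univ := by
    have hU0 : (Subtype.val ⁻¹' U A 0 : Set 𝔉) = Set.univ :=
      Set.eq_univ_of_forall fun x => x.1.zero_mem
    exact hU0 ▸ isCompact_preimage_U hM ha 0
  toQuasiSober := quasiSober_of_isClosedUnder hM ha hb
  toQuasiSeparatedSpace := .of_isTopologicalBasis (isTopologicalBasis_preimage_U 𝔉)
    fun m m' => by
      rw [← Set.preimage_inter, ← U_biprod]
      exact isCompact_preimage_U hM ha _
  toPrespectralSpace :=
    .of_isTopologicalBasis' (isTopologicalBasis_preimage_U 𝔉) (isCompact_preimage_U hM ha)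

end Topology

lemma isSpectralSpace_of_spectralSpace (X : Type*) [TopologicalSpace X] [SpectralSpace X] :
    IsSpectralSpace X :=
  ⟨inferInstance, inferInstance, inferInstance, PrespectralSpace.isTopologicalBasis,
    QuasiSeparatedSpace.inter_isCompact⟩

end

/-- Theorem 2.6: for a family `𝔉` of thick `K`-submodules of `M` with `M ∈ 𝔉`, closure
under nonempty intersections and filtered directed unions is equivalent to `𝔉` being the
set of fixed points of a closure operator of finite type; in particular, when this holds
`𝔉` is a spectral space with `{U(m) ∩ 𝔉}` a basis of quasi-compact opens. -/
theorem statement9 (𝔉 : Set (ThickSubmodule A)) (hM : topSub A ∈ 𝔉) :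
    (((∀ G : Set (ThickSubmodule A), G ⊆ 𝔉 → G.Nonempty →
        ∃ F ∈ 𝔉, F.carrier = ⋂ N ∈ G, ThickSubmodule.carrier N) ∧
      (∀ G : Set (ThickSubmodule A), G ⊆ 𝔉 → G.Nonempty →
        (∀ N₁ ∈ G, ∀ N₂ ∈ G, ∃ N₃ ∈ G,
          ThickSubmodule.carrier N₁ ⊆ ThickSubmodule.carrier N₃ ∧
          ThickSubmodule.carrier N₂ ⊆ ThickSubmodule.carrier N₃) →
        ∃ F ∈ 𝔉, F.carrier = ⋃ N ∈ G, ThickSubmodule.carrier N)) ↔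
      (∃ c : ThickSubmodule A → ThickSubmodule A, Extensive A c ∧ OrderPreserving A c ∧
        Idempotent A c ∧ FiniteType A c ∧ 𝔉 = {N : ThickSubmodule A | c N = N})) ∧
    (((∀ G : Set (ThickSubmodule A), G ⊆ 𝔉 → G.Nonempty →
        ∃ F ∈ 𝔉, F.carrier = ⋂ N ∈ G, ThickSubmodule.carrier N) ∧
      (∀ G : Set (ThickSubmodule A), G ⊆ 𝔉 → G.Nonempty →
        (∀ N₁ ∈ G, ∀ N₂ ∈ G, ∃ N₃ ∈ G,
          ThickSubmodule.carrier N₁ ⊆ ThickSubmodule.carrier N₃ ∧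
          ThickSubmodule.carrier N₂ ⊆ ThickSubmodule.carrier N₃) →
        ∃ F ∈ 𝔉, F.carrier = ⋃ N ∈ G, ThickSubmodule.carrier N)) →
      (IsSpectralSpace {N : ThickSubmodule A // N ∈ 𝔉} ∧
      TopologicalSpace.IsTopologicalBasis
        (Set.range fun m : M =>
          (Subtype.val ⁻¹' U A m : Set {N : ThickSubmodule A // N ∈ 𝔉})) ∧
      (∀ m : M, IsCompact (Subtype.val ⁻¹' U A m : Set {N : ThickSubmodule A // N ∈ 𝔉})))) := by
  refine ⟨⟨fun ⟨ha, hb⟩ => exists_closureOperator_of_isClosedUnder hM ha hb, ?_⟩, ?_⟩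
  · rintro ⟨c, hext, hmono, -, hft, rfl⟩
    exact ⟨isClosedUnderInter_setOf_fixed hext hmono,
      isClosedUnderDirectedUnion_setOf_fixed hext hmono hft⟩
  · rintro ⟨ha, hb⟩
    have := spectralSpace_of_isClosedUnder hM ha hb
    exact ⟨isSpectralSpace_of_spectralSpace _, isTopologicalBasis_preimage_U 𝔉,
      isCompact_preimage_U hM ha⟩
end
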